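/- Fix an integer n ≥ 2 and let C be a matrix in the hollow symmetric Monge polytope HM_n. Then C satisfies the triangle inequality c_{i,j} ≤ c_{i,k} + c_{k,j} for all indices i, j, k if and only if C lies in the convex hull of the set {(1/(2a(n−a))) · NESW(a×(n−a)) : 1 ≤ a ≤ n−1} (the metric face of HM_n). -/
import Mathlib


open Finset

/-- The Monge property for an `n × n` real matrix (indices are 0-based). -/
def IsMonge {n : ℕ} (C : Matrix (Fin n) (Fin n) ℝ) : Prop :=
  ∀ i I j J : Fin n, i < I → j < J → C i j + C I J ≤ C i J + C I j

/-- The hollow symmetric Monge polytope: symmetric matrices with zero diagonal,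
nonnegative entries summing to 1, and the Monge property. -/
def HM (n : ℕ) : Set (Matrix (Fin n) (Fin n) ℝ) :=
  {C | C.IsSymm ∧ (∀ i, C i i = 0) ∧ (∀ i j, 0 ≤ C i j) ∧
    (∑ i, ∑ j, C i j) = 1 ∧ IsMonge C}

/-- `NESW n a b` is the `n × n` 0/1 matrix whose (1-based) `(k, l)` entry is 1 iff
`(k ≤ a ∧ l > n - b) ∨ (k > n - b ∧ l ≤ a)`. -/
def NESW (n a b : ℕ) : Matrix (Fin n) (Fin n) ℝ :=
  Matrix.of fun k l =>
    if (k.val + 1 ≤ a ∧ n - b < l.val + 1) ∨ (n - b < k.val + 1 ∧ l.val + 1 ≤ a) then 1 else 0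

/-- The vertices of the metric face of the hollow symmetric Monge polytope:
the matrices `(1/(2a(n-a))) • NESW (a × (n-a))` for `1 ≤ a ≤ n - 1`. -/
def metricFaceVertices (n : ℕ) : Set (Matrix (Fin n) (Fin n) ℝ) :=
  {M | ∃ a ∈ Finset.Icc 1 (n - 1),
    M = (1 / (2 * (a : ℝ) * ((n - a : ℕ) : ℝ))) • NESW n a (n - a)}

lemma NESW_apply (n a : ℕ) (ha : a ≤ n) (k l : Fin n) :
    NESW n a (n - a) k l =
      if (k.val < a ∧ a ≤ l.val) ∨ (a ≤ k.val ∧ l.val < a) then 1 else 0 := by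
  have h : ((k.val + 1 ≤ a ∧ n - (n - a) < l.val + 1) ∨
      (n - (n - a) < k.val + 1 ∧ l.val + 1 ≤ a)) ↔
      ((k.val < a ∧ a ≤ l.val) ∨ (a ≤ k.val ∧ l.val < a)) := by omega
  simp only [NESW, Matrix.of_apply, h]

lemma NESW_triangle (n a : ℕ) (ha : a ≤ n) (i j k : Fin n) :
    NESW n a (n - a) i j ≤ NESW n a (n - a) i k + NESW n a (n - a) k j := by
  rw [NESW_apply n a ha, NESW_apply n a ha, NESW_apply n a ha]
  split_ifs <;> first | (exfalso; omega) | norm_num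

lemma count_lt (n a : ℕ) (ha : a ≤ n) :
    ∑ k : Fin n, (if k.val < a then (1 : ℝ) else 0) = a := by
  rw [Fin.sum_univ_eq_sum_range (fun k => if k < a then (1 : ℝ) else 0)]
  rw [Finset.sum_congr rfl (fun k _ =>
    if_congr (by simp only [Finset.mem_range]) rfl rfl : ∀ k ∈ Finset.range n,
      (if k < a then (1 : ℝ) else 0) = if k ∈ Finset.range a then (1 : ℝ) else 0)]
  rw [Finset.sum_ite_mem]
  have h : Finset.range n ∩ Finset.range a = Finset.range a := by
    apply Finset.ext; intro x; simp only [Finset.mem_inter, Finset.mem_range]; omega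
  rw [h]; simp

lemma count_ge (n a : ℕ) (ha : a ≤ n) :
    ∑ k : Fin n, (if a ≤ k.val then (1 : ℝ) else 0) = ((n - a : ℕ) : ℝ) := by
  rw [Fin.sum_univ_eq_sum_range (fun k => if a ≤ k then (1 : ℝ) else 0)]
  rw [Finset.sum_congr rfl (fun k hk => by
    simp only [Finset.mem_range] at hk
    exact if_congr (by simp only [Finset.mem_Ico]; omega) rfl rfl : ∀ k ∈ Finset.range n,
      (if a ≤ k then (1 : ℝ) else 0) = if k ∈ Finset.Ico a n then (1 : ℝ) else 0)]
  rw [Finset.sum_ite_mem]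
  have h : Finset.range n ∩ Finset.Ico a n = Finset.Ico a n := by
    apply Finset.ext; intro x
    simp only [Finset.mem_inter, Finset.mem_range, Finset.mem_Ico]; omega
  rw [h]; simp

lemma NESW_entry_sum (n a : ℕ) (ha : a ≤ n) :
    ∑ k : Fin n, ∑ l : Fin n, NESW n a (n - a) k l
      = 2 * (a : ℝ) * ((n - a : ℕ) : ℝ) := by
  have hentry : ∀ k l : Fin n, NESW n a (n - a) k l =
      (if k.val < a then (1 : ℝ) else 0) * (if a ≤ l.val then (1 : ℝ) else 0)
      + (if a ≤ k.val then (1 : ℝ) else 0) * (if l.val < a then (1 : ℝ) else 0) := by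
    intro k l
    rw [NESW_apply n a ha]
    split_ifs <;> first | (exfalso; omega) | norm_num
  simp only [hentry, Finset.sum_add_distrib]
  rw [← Finset.sum_mul_sum, ← Finset.sum_mul_sum, count_lt n a ha, count_ge n a ha]
  ring

/-- A matrix in the hollow symmetric Monge polytope satisfies the triangle inequality
if and only if it lies in the metric face (the convex hull of the vertices
`(1/(2a(n-a))) • NESW (a × (n-a))`, `1 ≤ a ≤ n-1`). -/
theorem triangle_iff_mem_metric_face (n : ℕ) (hn : 2 ≤ n)
    (C : Matrix (Fin n) (Fin n) ℝ) (hC : C ∈ HM n) :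
    (∀ i j k : Fin n, C i j ≤ C i k + C k j) ↔
      C ∈ convexHull ℝ (metricFaceVertices n) := by
  obtain ⟨hsymm, hdiag, hnn, hsum, hmonge⟩ := hC
  constructor
  · intro htri
    -- the superdiagonal entries
    set d : ℕ → ℝ := fun m => if h : m + 1 < n then C ⟨m, by omega⟩ ⟨m + 1, h⟩ else 0 with hd
    have hd_nonneg : ∀ m, 0 ≤ d m := by
      intro m
      simp only [hd]
      split
      · exact hnn _ _
      · exact le_refl 0
    -- telescoping identity
    have tele : ∀ (k : ℕ) (i j : Fin n), i.val + k = j.val →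
        C i j = ∑ m ∈ Finset.Ico i.val j.val, d m := by
      intro k
      induction k with
      | zero =>
        intro i j h
        have hij : i = j := Fin.ext (by omega)
        subst hij
        simp [hdiag]
      | succ k ih =>
        intro i j h
        have hjn : (j : ℕ) < n := j.isLt
        have hkn : i.val + k < n := by omega
        have hkn1 : i.val + k + 1 < n := by omega
        set j' : Fin n := ⟨i.val + k, hkn⟩ with hj'
        have hj'v : (j' : ℕ) = i.val + k := rfl
        have h1 : C i j = C i j' + C j' j := by
          rcases Nat.eq_zero_or_pos k with hk0 | hk0
          · have hji : j' = i := Fin.ext (by rw [hj'v]; omega)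
            rw [hji, hdiag i]
            ring
          · refine le_antisymm (htri i j j') ?_
            have hm := hmonge i j' j' j
              (by rw [Fin.lt_def, hj'v]; omega)
              (by rw [Fin.lt_def, hj'v]; omega)
            rw [hdiag j'] at hm
            linarith
        have h2 : C j' j = d (i.val + k) := by
          have hj : j = ⟨i.val + k + 1, hkn1⟩ := Fin.ext (show j.val = i.val + k + 1 by omega)
          rw [hj]
          simp only [hd]
          rw [dif_pos hkn1]
        have h3 : C i j' = ∑ m ∈ Finset.Ico i.val (i.val + k), d m := ih i j' rfl
        rw [h1, h2, h3, show j.val = i.val + k + 1 from by omega,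
          Finset.sum_Ico_succ_top (by omega : i.val ≤ i.val + k)]
    have tele' : ∀ i j : Fin n,
        C i j = ∑ m ∈ Finset.Ico (min i.val j.val) (max i.val j.val), d m := by
      intro i j
      rcases le_total i.val j.val with h | h
      · rw [min_eq_left h, max_eq_right h]
        exact tele (j.val - i.val) i j (by omega)
      · rw [min_eq_right h, max_eq_left h, hsymm.apply j i]
        exact tele (i.val - j.val) j i (by omega)
    -- the weights and vertex matrices
    set w : ℕ → ℝ := fun m => 2 * ((m + 1 : ℕ) : ℝ) * ((n - (m + 1) : ℕ) : ℝ) * d m with hw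
    set z : ℕ → Matrix (Fin n) (Fin n) ℝ := fun m =>
      (1 / (2 * ((m + 1 : ℕ) : ℝ) * ((n - (m + 1) : ℕ) : ℝ))) • NESW n (m + 1) (n - (m + 1))
      with hz
    have hzmem : ∀ m ∈ Finset.range (n - 1), z m ∈ metricFaceVertices n := by
      intro m hm
      simp only [Finset.mem_range] at hm
      exact ⟨m + 1, Finset.mem_Icc.mpr ⟨by omega, by omega⟩, by simp only [hz]⟩
    have hX : ∀ m ∈ Finset.range (n - 1),
        (0 : ℝ) < 2 * ((m + 1 : ℕ) : ℝ) * ((n - (m + 1) : ℕ) : ℝ) := by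
      intro m hm
      simp only [Finset.mem_range] at hm
      have h1 : (0 : ℝ) < ((m + 1 : ℕ) : ℝ) := by positivity
      have h2 : (0 : ℝ) < ((n - (m + 1) : ℕ) : ℝ) := by
        exact_mod_cast Nat.cast_pos.mpr (by omega : 0 < n - (m + 1))
      positivity
    have hw_nonneg : ∀ m ∈ Finset.range (n - 1), 0 ≤ w m := by
      intro m hm
      have h1 : (0 : ℝ) ≤ ((m + 1 : ℕ) : ℝ) := by positivity
      have h2 : (0 : ℝ) ≤ ((n - (m + 1) : ℕ) : ℝ) := by positivity
      simp only [hw]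
      have := hd_nonneg m
      positivity
    -- the decomposition of C
    have hdecomp : C = ∑ m ∈ Finset.range (n - 1), w m • z m := by
      ext i j
      rw [Matrix.sum_apply]
      have hterm : ∀ m ∈ Finset.range (n - 1), (w m • z m) i j =
          if m ∈ Finset.Ico (min i.val j.val) (max i.val j.val) then d m else 0 := by
        intro m hm
        have hX' := hX m hm
        have hne : 2 * ((m + 1 : ℕ) : ℝ) * ((n - (m + 1) : ℕ) : ℝ) ≠ 0 := ne_of_gt hX'
        have hmn : m + 1 ≤ n := by
          simp only [Finset.mem_range] at hm
          omega
        simp only [hw, hz, Matrix.smul_apply, smul_eq_mul]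
        rw [NESW_apply n (m + 1) hmn]
        have hcond : ((i.val < m + 1 ∧ m + 1 ≤ j.val) ∨ (m + 1 ≤ i.val ∧ j.val < m + 1)) ↔
            (m ∈ Finset.Ico (min i.val j.val) (max i.val j.val)) := by
          simp only [Finset.mem_Ico]
          omega
        simp only [hcond]
        split_ifs with hcase
        · linear_combination d m * one_div_mul_cancel hne
        · ring
      rw [Finset.sum_congr rfl hterm, Finset.sum_ite_mem]
      have hint : Finset.range (n - 1) ∩ Finset.Ico (min i.val j.val) (max i.val j.val)
          = Finset.Ico (min i.val j.val) (max i.val j.val) := by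
        apply Finset.ext
        intro x
        have h1 : i.val < n := i.isLt
        have h2 : j.val < n := j.isLt
        simp only [Finset.mem_inter, Finset.mem_range, Finset.mem_Ico]
        omega
      rw [hint]
      exact tele' i j
    -- the weights sum to one
    have hz1 : ∀ m ∈ Finset.range (n - 1), ∑ i : Fin n, ∑ j : Fin n, z m i j = 1 := by
      intro m hm
      have hX' := hX m hm
      have hne : 2 * ((m + 1 : ℕ) : ℝ) * ((n - (m + 1) : ℕ) : ℝ) ≠ 0 := ne_of_gt hX'
      have hmn : m + 1 ≤ n := by
        simp only [Finset.mem_range] at hm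
        omega
      simp only [hz, Matrix.smul_apply, smul_eq_mul, ← Finset.mul_sum]
      rw [NESW_entry_sum n (m + 1) hmn]
      exact one_div_mul_cancel hne
    have hwsum : ∑ m ∈ Finset.range (n - 1), w m = 1 := by
      have hcalc : ∑ i : Fin n, ∑ j : Fin n, C i j = ∑ m ∈ Finset.range (n - 1), w m := by
        conv_lhs => rw [hdecomp]
        simp only [Matrix.sum_apply, Matrix.smul_apply, smul_eq_mul]
        rw [Finset.sum_congr rfl (fun i _ => Finset.sum_comm), Finset.sum_comm]
        refine Finset.sum_congr rfl fun m hm => ?_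
        simp only [← Finset.mul_sum]
        rw [hz1 m hm, mul_one]
      rw [← hcalc, hsum]
    have hmem := Finset.centerMass_mem_convexHull (Finset.range (n - 1)) hw_nonneg
      (by rw [hwsum]; norm_num) hzmem
    rwa [Finset.centerMass_eq_of_sum_1 _ z hwsum, ← hdecomp] at hmem
  · intro hmem i j k
    have hsub : metricFaceVertices n ⊆
        {M : Matrix (Fin n) (Fin n) ℝ | ∀ i j k : Fin n, M i j ≤ M i k + M k j} := by
      rintro M ⟨a, ha, rfl⟩ i j k
      simp only [Finset.mem_Icc] at ha
      have han : a ≤ n := by omega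
      have hc : (0 : ℝ) ≤ 1 / (2 * (a : ℝ) * ((n - a : ℕ) : ℝ)) := by positivity
      simp only [Matrix.smul_apply, smul_eq_mul]
      rw [← mul_add]
      exact mul_le_mul_of_nonneg_left (NESW_triangle n a han i j k) hc
    have hconv : Convex ℝ
        {M : Matrix (Fin n) (Fin n) ℝ | ∀ i j k : Fin n, M i j ≤ M i k + M k j} := by
      intro x hx y hy p q hp hq hpq
      simp only [Set.mem_setOf_eq] at hx hy ⊢
      intro i j k
      simp only [Matrix.add_apply, Matrix.smul_apply, smul_eq_mul]
      nlinarith [mul_le_mul_of_nonneg_left (hx i j k) hp,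
        mul_le_mul_of_nonneg_left (hy i j k) hq]
    exact convexHull_min hsub hconv hmem i j k
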